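/- Let M be a bounded complete pointed metric space and {M_α : α ∈ A} a collection of closed subsets of M each containing the base point 0. Then ⋂_α F(M_α) = F(⋂_α M_α), where F(N) denotes the closed span of {δ(x) : x ∈ N} inside F(M). -/

import Mathlib

noncomputable section

open Metric Set

/-- The space of real-valued Lipschitz functions on `M` vanishing at `base`. -/
structure Lip0 (M : Type*) [MetricSpace M] (base : M) where
  toFun : M → ℝ
  exists_lip' : ∃ K, LipschitzWith K toFun
  map_base' : toFun base = 0

namespace Lip0

variable {M : Type*} [MetricSpace M] {base : M}

instance : FunLike (Lip0 M base) M ℝ where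
  coe := toFun
  coe_injective := by rintro ⟨f, _, _⟩ ⟨g, _, _⟩ h; simpa using h

@[simp] lemma map_base (f : Lip0 M base) : f base = 0 := f.map_base'

/-- The set of (nonnegative real) Lipschitz constants of `f`. -/
def lipSet (f : Lip0 M base) : Set ℝ :=
  {K | 0 ≤ K ∧ ∀ x y, |f x - f y| ≤ K * dist x y}

lemma lipSet_nonempty (f : Lip0 M base) : (lipSet f).Nonempty := by
  obtain ⟨K, hK⟩ := f.exists_lip'
  exact ⟨K, K.coe_nonneg, fun x y => by
    have h := hK.dist_le_mul x y; rw [Real.dist_eq] at h; exact h⟩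

lemma lipSet_bddBelow (f : Lip0 M base) : BddBelow (lipSet f) :=
  ⟨0, fun K hK => hK.1⟩

lemma sInf_mem_lipSet (f : Lip0 M base) : sInf (lipSet f) ∈ lipSet f := by
  constructor
  · exact le_csInf (lipSet_nonempty f) fun K hK => hK.1
  · intro x y
    rcases eq_or_ne x y with rfl | hxy
    · simp
    · have hd : 0 < dist x y := dist_pos.2 hxy
      rw [← div_le_iff₀ hd]
      exact le_csInf (lipSet_nonempty f) fun K hK => (div_le_iff₀ hd).2 (hK.2 x y)

instance : Zero (Lip0 M base) :=
  ⟨⟨fun _ => 0, ⟨0, LipschitzWith.const 0⟩, rfl⟩⟩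

instance : Add (Lip0 M base) :=
  ⟨fun f g => ⟨fun t => f t + g t, by
    obtain ⟨Kf, hf⟩ := f.exists_lip'; obtain ⟨Kg, hg⟩ := g.exists_lip'
    exact ⟨Kf + Kg, hf.add hg⟩, by simp⟩⟩

instance : Neg (Lip0 M base) :=
  ⟨fun f => ⟨fun t => -f t, by
    obtain ⟨Kf, hf⟩ := f.exists_lip'
    exact ⟨Kf, hf.neg⟩, by simp⟩⟩

def rsmul (c : ℝ) (f : Lip0 M base) : Lip0 M base :=
  ⟨fun t => c * f t, by
    obtain ⟨Kf, hf⟩ := f.exists_lip'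
    refine ⟨⟨|c|, abs_nonneg c⟩ * Kf, LipschitzWith.of_dist_le_mul fun x y => ?_⟩
    have h1 : dist (c * f x) (c * f y) = |c| * |f x - f y| := by
      rw [Real.dist_eq, ← abs_mul, mul_sub]
    have h2 := hf.dist_le_mul x y
    rw [Real.dist_eq] at h2
    rw [h1]
    calc |c| * |f x - f y| ≤ |c| * (Kf * dist x y) :=
          mul_le_mul_of_nonneg_left h2 (abs_nonneg c)
      _ = (⟨|c|, abs_nonneg c⟩ * Kf : NNReal) * dist x y := by
          exact (mul_assoc _ _ _).symm, by simp⟩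

instance : SMul ℝ (Lip0 M base) := ⟨rsmul⟩
instance : SMul ℕ (Lip0 M base) := ⟨fun n => rsmul (n : ℝ)⟩
instance : SMul ℤ (Lip0 M base) := ⟨fun n => rsmul (n : ℝ)⟩
instance : Sub (Lip0 M base) := ⟨fun f g => f + -g⟩

@[simp] lemma coe_zero : ⇑(0 : Lip0 M base) = fun _ => 0 := rfl
@[simp] lemma coe_add (f g : Lip0 M base) : ⇑(f + g) = fun t => f t + g t := rfl
@[simp] lemma coe_neg (f : Lip0 M base) : ⇑(-f) = fun t => -f t := rfl
@[simp] lemma coe_smul (c : ℝ) (f : Lip0 M base) : ⇑(c • f) = fun t => c * f t := rfl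
@[simp] lemma coe_sub (f g : Lip0 M base) : ⇑(f - g) = fun t => f t - g t := by
  show (fun t => f t + -(g t)) = _
  funext t; ring

instance : AddCommGroup (Lip0 M base) :=
  (DFunLike.coe_injective (F := Lip0 M base)).addCommGroup _
    rfl (fun _ _ => rfl) (fun _ => rfl) (fun f g => coe_sub f g)
    (fun f n => by funext t; show (n : ℝ) * f t = n • f t; simp)
    (fun f n => by funext t; show (n : ℝ) * f t = n • f t; simp)

instance : Module ℝ (Lip0 M base) :=
  (DFunLike.coe_injective (F := Lip0 M base)).module ℝ
    { toFun := fun f : Lip0 M base => ⇑f, map_zero' := rfl, map_add' := fun _ _ => rfl }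
    (fun _ _ => rfl)

lemma lipSet_neg (f : Lip0 M base) : lipSet (-f) = lipSet f := by
  unfold lipSet
  ext K
  have e : ∀ x y : M, (-f) x - (-f) y = -(f x - f y) := fun x y => by
    show -f x - -f y = -(f x - f y); ring
  constructor <;> rintro ⟨h0, h⟩ <;> refine ⟨h0, fun x y => ?_⟩
  · have := h x y; rwa [e, abs_neg] at this
  · rw [e, abs_neg]; exact h x y

instance : NormedAddCommGroup (Lip0 M base) :=
  AddGroupNorm.toNormedAddCommGroup
  { toFun := fun f => sInf (lipSet f)
    map_zero' := by
      apply le_antisymm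
      · exact csInf_le (lipSet_bddBelow _) ⟨le_refl 0, fun x y => by simp⟩
      · exact (sInf_mem_lipSet (0 : Lip0 M base)).1
    add_le' := fun f g => by
      apply csInf_le (lipSet_bddBelow _)
      refine ⟨add_nonneg (sInf_mem_lipSet f).1 (sInf_mem_lipSet g).1, fun x y => ?_⟩
      have hf := (sInf_mem_lipSet f).2 x y
      have hg := (sInf_mem_lipSet g).2 x y
      calc |(f + g) x - (f + g) y| = |(f x - f y) + (g x - g y)| := by
            simp [coe_add]; ring_nf
        _ ≤ |f x - f y| + |g x - g y| := abs_add_le _ _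
        _ ≤ sInf (lipSet f) * dist x y + sInf (lipSet g) * dist x y := add_le_add hf hg
        _ = (sInf (lipSet f) + sInf (lipSet g)) * dist x y := by ring
    neg' := fun f => by show sInf (lipSet (-f)) = sInf (lipSet f); rw [lipSet_neg]
    eq_zero_of_map_eq_zero' := fun f hf => by
      have hf' : sInf (lipSet f) = 0 := hf
      apply DFunLike.coe_injective
      funext t
      have h := (sInf_mem_lipSet f).2 t base
      rw [hf', zero_mul] at h
      have h0 : f t - f base = 0 := abs_nonpos_iff.1 h
      show f t = (0 : Lip0 M base) t
      have : (0 : Lip0 M base) t = 0 := rfl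
      rw [this]
      simpa using h0 }

lemma norm_def (f : Lip0 M base) : ‖f‖ = sInf (lipSet f) := rfl

instance : NormedSpace ℝ (Lip0 M base) where
  norm_smul_le c f := by
    rw [norm_def, norm_def, Real.norm_eq_abs]
    apply csInf_le (lipSet_bddBelow _)
    refine ⟨mul_nonneg (abs_nonneg c) (sInf_mem_lipSet f).1, fun x y => ?_⟩
    have hf := (sInf_mem_lipSet f).2 x y
    calc |(c • f) x - (c • f) y| = |c| * |f x - f y| := by
          rw [coe_smul]; rw [← abs_mul]; ring_nf
      _ ≤ |c| * (sInf (lipSet f) * dist x y) :=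
          mul_le_mul_of_nonneg_left hf (abs_nonneg c)
      _ = |c| * sInf (lipSet f) * dist x y := by ring

lemma norm_apply_le (f : Lip0 M base) (x y : M) : |f x - f y| ≤ ‖f‖ * dist x y :=
  (sInf_mem_lipSet f).2 x y

end Lip0

open Lip0 NormedSpace

variable (M : Type*) [MetricSpace M]

/-- The Dirac evaluation functional at `x`. -/
def deltaF (base x : M) : StrongDual ℝ (Lip0 M base) :=
  LinearMap.mkContinuous
    { toFun := fun f => f x
      map_add' := fun _ _ => rfl
      map_smul' := fun _ _ => rfl }
    (dist x base)
    (fun f => by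
      have h := Lip0.norm_apply_le f x base
      simp only [Lip0.map_base, sub_zero] at h
      rw [Real.norm_eq_abs, mul_comm]; exact h)

variable {M}

@[simp] lemma deltaF_apply (base x : M) (f : Lip0 M base) : deltaF M base x f = f x := rfl

/-- The molecule `(δ x - δ y)/d(x,y)`. -/
def molecule (base x y : M) : StrongDual ℝ (Lip0 M base) :=
  (dist x y)⁻¹ • (deltaF M base x - deltaF M base y)

variable (M) in
/-- The Lipschitz-free space over `M`, realized as the closed linear span of the Dirac
evaluations inside the dual of `Lip0 M base`. -/
def FreeSpace (base : M) : Submodule ℝ (StrongDual ℝ (Lip0 M base)) :=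
  (Submodule.span ℝ (Set.range (deltaF M base))).topologicalClosure

variable (M) in
/-- The subspace of the free space generated by the Diracs of a subset `S ⊆ M`. -/
def FreeSpaceOn (base : M) (S : Set M) : Submodule ℝ (StrongDual ℝ (Lip0 M base)) :=
  (Submodule.span ℝ (deltaF M base '' S)).topologicalClosure

lemma deltaF_mem (base x : M) : deltaF M base x ∈ FreeSpace M base :=
  Submodule.le_topologicalClosure _ (Submodule.subset_span ⟨x, rfl⟩)

lemma molecule_mem (base x y : M) : molecule base x y ∈ FreeSpace M base :=
  Submodule.smul_mem _ _ (Submodule.sub_mem _ (deltaF_mem base x) (deltaF_mem base y))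

/-- The molecule as an element of the free space. -/
def mol (base x y : M) : ↥(FreeSpace M base) := ⟨molecule base x y, molecule_mem base x y⟩

/-- The "magic function" of Ivakhno, Kadets and Werner associated to the pair `(p, q)`,
with base point `o`. -/
def magicFun (o p q : M) (t : M) : ℝ :=
  (dist p q / 2) *
    ((dist t q - dist t p) / (dist t q + dist t p) -
      (dist o q - dist o p) / (dist o q + dist o p))

/-! For `μ` in the free space, call `x` a support point of `μ` if every ball around `x` carries
a Lipschitz function on which `μ` does not vanish. By Hahn–Banach, `μ ∈ F(N)` as soon as `μ`
annihilates every Lipschitz function vanishing on `N`. If `μ ∈ F(M_a)`, every support point of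
`μ` lies in the closed set `M_a`, so all support points lie in `⋂ M_a`; it remains to show that
`μ f = 0` whenever `f` vanishes at all support points of `μ`.

Elements of the free space are continuous along norm-bounded, pointwise convergent nets of
Lipschitz functions. Hence if `μ f ≠ 0`, then `μ` does not vanish on some soft thresholding of
`f`, which is supported where `|f| > τ`. On a bounded space, multiplying by suprema of tent
functions of radius `ρ` (which have Lipschitz constant `1/ρ` however many tents are used) and
telescoping localizes any function not annihilated by `μ` into a ball of radius `ρ`. Repeating
this with radii halving at every step yields a Cauchy sequence whose limit, by completeness, is
a support point so close to a point where `|f| > τ` that `f`, being Lipschitz, cannot vanish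
at it. -/

open Filter Function
open scoped NNReal Topology

lemma LipschitzWith.mul_of_abs_le {α : Type*} [PseudoMetricSpace α] {f w : α → ℝ}
    {Kf Kw B : ℝ≥0} (hf : LipschitzWith Kf f) (hw : LipschitzWith Kw w)
    (hfB : ∀ x, |f x| ≤ B) (hw1 : ∀ x, |w x| ≤ 1) :
    LipschitzWith (Kf + B * Kw) fun x => f x * w x :=
  LipschitzWith.of_dist_le_mul fun x y => by
    have hfxy : |f x - f y| ≤ Kf * dist x y := by
      simpa only [Real.dist_eq] using hf.dist_le_mul x y
    have hwxy : |w x - w y| ≤ Kw * dist x y := by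
      simpa only [Real.dist_eq] using hw.dist_le_mul x y
    calc dist (f x * w x) (f y * w y) = |(f x - f y) * w x + f y * (w x - w y)| := by
          rw [Real.dist_eq]; ring_nf
      _ ≤ |f x - f y| * |w x| + |f y| * |w x - w y| := by
          rw [← abs_mul, ← abs_mul]; exact abs_add_le _ _
      _ ≤ Kf * dist x y * 1 + B * (Kw * dist x y) := by
          gcongr
          · exact hw1 x
          · exact hfB y
      _ = ↑(Kf + B * Kw) * dist x y := by push_cast; ring

namespace Lip0

variable {M : Type*} [MetricSpace M] {base : M}

@[ext] lemma ext {f g : Lip0 M base} (h : ∀ t, f t = g t) : f = g := DFunLike.ext f g h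

def ofLipschitzWith (F : M → ℝ) {K : ℝ≥0} (hF : LipschitzWith K F) (h0 : F base = 0) :
    Lip0 M base :=
  ⟨F, ⟨K, hF⟩, h0⟩

@[simp] lemma coe_ofLipschitzWith (F : M → ℝ) {K : ℝ≥0} (hF : LipschitzWith K F)
    (h0 : F base = 0) : ⇑(ofLipschitzWith F hF h0) = F := rfl

lemma norm_ofLipschitzWith_le (F : M → ℝ) {K : ℝ≥0} (hF : LipschitzWith K F)
    (h0 : F base = 0) : ‖ofLipschitzWith F hF h0‖ ≤ K :=
  csInf_le (lipSet_bddBelow _) ⟨K.2, fun x y => by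
    simpa only [Real.dist_eq, coe_ofLipschitzWith] using hF.dist_le_mul x y⟩

lemma lipschitzWith (f : Lip0 M base) : LipschitzWith ‖f‖₊ f :=
  LipschitzWith.of_dist_le_mul fun x y => by
    simpa only [Real.dist_eq, coe_nnnorm] using norm_apply_le f x y

def softThreshold (f : Lip0 M base) {τ : ℝ} (hτ : 0 ≤ τ) : Lip0 M base :=
  ofLipschitzWith (fun t => f t - max (-τ) (min τ (f t)))
    (f.lipschitzWith.sub ((f.lipschitzWith.const_min τ).const_max (-τ))) (by simp [hτ])

lemma norm_softThreshold_le (f : Lip0 M base) {τ : ℝ} (hτ : 0 ≤ τ) :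
    ‖f.softThreshold hτ‖ ≤ 2 * ‖f‖ :=
  (norm_ofLipschitzWith_le _ _ _).trans_eq <| by push_cast; ring

lemma lt_abs_of_softThreshold_ne_zero (f : Lip0 M base) {τ : ℝ} (hτ : 0 ≤ τ) {t : M}
    (ht : f.softThreshold hτ t ≠ 0) : τ < |f t| := by
  by_contra! h
  obtain ⟨h₁, h₂⟩ := abs_le.1 h
  exact ht (by simp [softThreshold, min_eq_right h₂, max_eq_right h₁])

lemma tendsto_softThreshold (f : Lip0 M base) (t : M) :
    Tendsto (fun n : ℕ => f.softThreshold (Nat.one_div_pos_of_nat (n := n)).le t) atTop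
      (𝓝 (f t)) := by
  have hτ := tendsto_one_div_add_atTop_nhds_zero_nat (𝕜 := ℝ)
  simpa [softThreshold] using
    tendsto_const_nhds.sub (hτ.neg.max (hτ.min (tendsto_const_nhds (x := f t))))

section Bounded

variable [BoundedSpace M]

lemma abs_apply_le_norm_mul_diam (f : Lip0 M base) (t : M) :
    |f t| ≤ ‖f‖ * diam (univ : Set M) := by
  simpa using norm_apply_le f t base |>.trans <| mul_le_mul_of_nonneg_left
    (dist_le_diam_of_mem (Bornology.isBounded_univ.2 ‹_›) (mem_univ t) (mem_univ base))
    (norm_nonneg f)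

def mulWeight (g : Lip0 M base) {w : M → ℝ} {K : ℝ≥0} (hw : LipschitzWith K w)
    (hw1 : ∀ t, |w t| ≤ 1) : Lip0 M base :=
  ofLipschitzWith (fun t => g t * w t)
    (g.lipschitzWith.mul_of_abs_le hw (B := ‖g‖₊ * (diam (univ : Set M)).toNNReal)
      (fun t => by simpa [Real.coe_toNNReal _ diam_nonneg] using abs_apply_le_norm_mul_diam g t)
      hw1) (by simp)

@[simp] lemma coe_mulWeight (g : Lip0 M base) {w : M → ℝ} {K : ℝ≥0} (hw : LipschitzWith K w)
    (hw1 : ∀ t, |w t| ≤ 1) : ⇑(g.mulWeight hw hw1) = fun t => g t * w t := rfl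

lemma norm_mulWeight_le (g : Lip0 M base) {w : M → ℝ} {K : ℝ≥0} (hw : LipschitzWith K w)
    (hw1 : ∀ t, |w t| ≤ 1) :
    ‖g.mulWeight hw hw1‖ ≤ ‖g‖ + ‖g‖ * diam (univ : Set M) * K :=
  (norm_ofLipschitzWith_le _ _ _).trans_eq <| by simp [Real.coe_toNNReal _ diam_nonneg]

end Bounded

end Lip0

section Tent

variable {M : Type*} [MetricSpace M] {ρ : ℝ}

def tent (ρ : ℝ) (x t : M) : ℝ := max 0 (1 - dist t x / ρ)

lemma tent_le_one (hρ : 0 ≤ ρ) (x t : M) : tent ρ x t ≤ 1 :=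
  max_le zero_le_one (sub_le_self _ (div_nonneg dist_nonneg hρ))

@[simp] lemma tent_self (ρ : ℝ) (x : M) : tent ρ x x = 1 := by simp [tent]

lemma dist_lt_of_tent_pos (hρ : 0 < ρ) {x t : M} (h : 0 < tent ρ x t) : dist t x < ρ := by
  have : 0 < 1 - dist t x / ρ := by simpa [tent] using h
  rwa [sub_pos, div_lt_one hρ] at this

lemma lipschitzWith_tent (hρ : 0 ≤ ρ) (x : M) :
    LipschitzWith (Real.toNNReal ρ⁻¹) (tent ρ x) :=
  (LipschitzWith.of_dist_le' fun t s => by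
    rw [Real.dist_eq, sub_sub_sub_cancel_left, ← sub_div, abs_div, abs_of_nonneg hρ,
      div_eq_inv_mul]
    exact mul_le_mul_of_nonneg_left (abs_dist_sub_le s t x |>.trans_eq (dist_comm s t))
      (inv_nonneg.2 hρ)).const_max 0

def tentSup (ρ : ℝ) (F : Finset M) (t : M) : ℝ := F.fold max 0 fun x => tent ρ x t

@[simp] lemma tentSup_empty (t : M) : tentSup ρ ∅ t = 0 := Finset.fold_empty

lemma tentSup_insert [DecidableEq M] {a : M} {F : Finset M} (ha : a ∉ F) (t : M) :
    tentSup ρ (insert a F) t = max (tent ρ a t) (tentSup ρ F t) :=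
  Finset.fold_insert ha

lemma tentSup_nonneg (F : Finset M) (t : M) : 0 ≤ tentSup ρ F t :=
  (Finset.le_fold_max _).2 (Or.inl le_rfl)

lemma tentSup_le_one (hρ : 0 ≤ ρ) (F : Finset M) (t : M) : tentSup ρ F t ≤ 1 :=
  (Finset.fold_max_le _).2 ⟨zero_le_one, fun x _ => tent_le_one hρ x t⟩

lemma abs_tentSup_le_one (hρ : 0 ≤ ρ) (F : Finset M) (t : M) : |tentSup ρ F t| ≤ 1 :=
  (abs_of_nonneg (tentSup_nonneg F t)).trans_le (tentSup_le_one hρ F t)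

lemma tentSup_of_mem (hρ : 0 ≤ ρ) {F : Finset M} {t : M} (ht : t ∈ F) : tentSup ρ F t = 1 :=
  (tentSup_le_one hρ F t).antisymm <|
    (Finset.le_fold_max _).2 (Or.inr ⟨t, ht, (tent_self ρ t).ge⟩)

lemma lipschitzWith_tentSup (hρ : 0 ≤ ρ) (F : Finset M) :
    LipschitzWith (Real.toNNReal ρ⁻¹) (tentSup ρ F) := by
  classical
  induction F using Finset.induction_on with
  | empty => simpa [funext (tentSup_empty (ρ := ρ) (M := M))] using
      LipschitzWith.const' (α := M) (0 : ℝ)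
  | insert a F ha ih =>
    simpa only [funext (tentSup_insert ha), max_self] using (lipschitzWith_tent hρ a).max ih

end Tent

section FreeSpace

variable {M : Type*} [MetricSpace M] {base : M}

lemma freeSpace_eq_freeSpaceOn_univ : FreeSpace M base = FreeSpaceOn M base univ := by
  rw [FreeSpace, FreeSpaceOn, image_univ]

lemma freeSpaceOn_mono {S T : Set M} (h : S ⊆ T) :
    FreeSpaceOn M base S ≤ FreeSpaceOn M base T :=
  Submodule.topologicalClosure_mono (Submodule.span_mono (image_mono h))

lemma freeSpaceOn_le_freeSpace (S : Set M) : FreeSpaceOn M base S ≤ FreeSpace M base :=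
  freeSpace_eq_freeSpaceOn_univ (base := base) ▸ freeSpaceOn_mono (subset_univ S)

lemma freeSpaceOn_le_ker {S : Set M} {Φ : StrongDual ℝ (StrongDual ℝ (Lip0 M base))}
    (hΦ : ∀ x ∈ S, Φ (deltaF M base x) = 0) :
    FreeSpaceOn M base S ≤ LinearMap.ker (Φ : StrongDual ℝ (Lip0 M base) →ₗ[ℝ] ℝ) :=
  Submodule.topologicalClosure_minimal _
    (Submodule.span_le.2 <| by rintro _ ⟨x, hx, rfl⟩; exact hΦ x hx) Φ.isClosed_ker

lemma apply_eq_zero_of_mem_freeSpaceOn {S : Set M} {μ : StrongDual ℝ (Lip0 M base)}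
    (hμ : μ ∈ FreeSpaceOn M base S) {g : Lip0 M base} (hg : ∀ y ∈ S, g y = 0) : μ g = 0 :=
  freeSpaceOn_le_ker (Φ := ContinuousLinearMap.apply ℝ ℝ g) (fun x hx => hg x hx) hμ

lemma deltaF_base : deltaF M base base = 0 := by
  ext f; simp

lemma lipschitzWith_deltaF : LipschitzWith 1 (deltaF M base) :=
  LipschitzWith.of_dist_le_mul fun x y => by
    rw [dist_eq_norm, NNReal.coe_one, one_mul]
    exact ContinuousLinearMap.opNorm_le_bound _ dist_nonneg fun f => by
      simpa [mul_comm] using Lip0.norm_apply_le f x y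

lemma tendsto_apply_of_tendsto_pointwise {μ : StrongDual ℝ (Lip0 M base)}
    (hμ : μ ∈ FreeSpace M base) {ι : Type*} {l : Filter ι} {g : ι → Lip0 M base}
    {g₀ : Lip0 M base} {C : ℝ} (hC : ∀ i, ‖g i‖ ≤ C)
    (hg : ∀ t, Tendsto (fun i => g i t) l (𝓝 (g₀ t))) :
    Tendsto (fun i => μ (g i)) l (𝓝 (μ g₀)) := by
  -- The functionals along which the convergence holds form a subspace containing the Dirac
  -- masses, closed by equicontinuity of the evaluations at the uniformly bounded `g i`.
  let ev : ι → StrongDual ℝ (Lip0 M base) →L[ℝ] ℝ := fun i =>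
    ContinuousLinearMap.apply ℝ ℝ (g i)
  have hev : ∀ i, ‖ev i‖ ≤ C := fun i =>
    ContinuousLinearMap.opNorm_le_bound _ ((norm_nonneg _).trans (hC i)) fun ν => by
      simpa [ev, mul_comm] using ν.le_opNorm (g i) |>.trans
        (mul_le_mul_of_nonneg_left (hC i) (norm_nonneg ν))
  have hequi : Equicontinuous fun i => ⇑(ev i) :=
    ((NormedSpace.equicontinuous_TFAE ev).out 5 1).1 (by exact ⟨C, hev⟩)
  have hclosed := hequi.isClosed_setOfPred_tendsto (l := l)
    (ContinuousLinearMap.apply ℝ ℝ g₀).continuous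
  let T : Submodule ℝ (StrongDual ℝ (Lip0 M base)) :=
    { carrier := {ν | Tendsto (fun i => ν (g i)) l (𝓝 (ν g₀))}
      add_mem' := fun h h' => by simpa using h.add h'
      zero_mem' := tendsto_const_nhds
      smul_mem' := fun c ν h => by simpa using h.const_mul c }
  refine Submodule.topologicalClosure_minimal (t := T) _ ?_ hclosed hμ
  rw [Submodule.span_le]
  rintro _ ⟨x, rfl⟩
  exact hg x

lemma mem_freeSpaceOn_of_forall_apply_eq_zero {N : Set M} {μ : StrongDual ℝ (Lip0 M base)}
    (hμ : μ ∈ FreeSpace M base) (h : ∀ g : Lip0 M base, (∀ y ∈ N, g y = 0) → μ g = 0) :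
    μ ∈ FreeSpaceOn M base N := by
  by_contra hμN
  obtain ⟨Φ, u, hΦN, hΦμ⟩ := geometric_hahn_banach_closed_point (Submodule.convex _)
    (Submodule.isClosed_topologicalClosure _) hμN
  have hΦ : ∀ ν ∈ FreeSpaceOn M base N, Φ ν = 0 := fun ν hν => by
    by_contra hν0
    have := hΦN _ (Submodule.smul_mem _ (u / Φ ν) hν)
    rw [map_smul, smul_eq_mul, div_mul_cancel₀ _ hν0] at this
    exact this.false
  let f : Lip0 M base := Lip0.ofLipschitzWith (fun x => Φ (deltaF M base x))
    (Φ.lipschitz.comp lipschitzWith_deltaF) (by simp [deltaF_base])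
  have hΦf : Φ μ = μ f := by
    have := freeSpaceOn_le_ker (Φ := Φ - ContinuousLinearMap.apply ℝ ℝ f) (S := univ)
      (fun x _ => by simp [f]) (freeSpace_eq_freeSpaceOn_univ (M := M) ▸ hμ)
    simpa [sub_eq_zero] using this
  have hf : μ f = 0 := h f fun y hy =>
    hΦ _ (Submodule.le_topologicalClosure _ (Submodule.subset_span ⟨y, hy, rfl⟩))
  have hu : 0 < u := by simpa using hΦN 0 (Submodule.zero_mem _)
  linarith

end FreeSpace

section Localization

variable {M : Type*} [MetricSpace M] [BoundedSpace M] {base : M}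
  {μ : StrongDual ℝ (Lip0 M base)} {g : Lip0 M base} {ρ : ℝ}

lemma apply_mulWeight_tentSup_eq_zero (hρ : 0 < ρ)
    (H : ∀ (x : M) (g' : Lip0 M base), support g' ⊆ support g ∩ ball x ρ → μ g' = 0)
    (F : Finset M) :
    μ (g.mulWeight (lipschitzWith_tentSup hρ.le F) (abs_tentSup_le_one hρ.le F)) = 0 := by
  classical
  induction F using Finset.induction_on with
  | empty => convert map_zero μ; ext t; simp
  | insert a F ha ih =>
    set w : M → ℝ := fun t => max 0 (tent ρ a t - tentSup ρ F t)
    have hw : LipschitzWith _ w :=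
      ((lipschitzWith_tent hρ.le a).sub (lipschitzWith_tentSup hρ.le F)).const_max 0
    have hw1 : ∀ t, |w t| ≤ 1 := fun t => (abs_of_nonneg (le_max_left _ _)).trans_le <|
      max_le zero_le_one (by linarith [tent_le_one hρ.le a t, tentSup_nonneg (ρ := ρ) F t])
    have hsplit : g.mulWeight (lipschitzWith_tentSup hρ.le (insert a F))
          (abs_tentSup_le_one hρ.le _) =
        g.mulWeight (lipschitzWith_tentSup hρ.le F) (abs_tentSup_le_one hρ.le F) +
          g.mulWeight hw hw1 := by
      ext t
      simp only [Lip0.coe_mulWeight, Lip0.coe_add, tentSup_insert ha, w]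
      rcases le_total (tent ρ a t) (tentSup ρ F t) with h | h
      · rw [max_eq_right h, max_eq_left (sub_nonpos.2 h)]; ring
      · rw [max_eq_left h, max_eq_right (sub_nonneg.2 h)]; ring
    have hsupp : support (g.mulWeight hw hw1) ⊆ support g ∩ ball a ρ := fun t ht => by
      obtain ⟨hgt, hwt⟩ := mul_ne_zero_iff.1 ht
      refine ⟨hgt, dist_lt_of_tent_pos hρ ?_⟩
      have := lt_of_le_of_ne (le_max_left _ _) (Ne.symm hwt)
      linarith [lt_max_iff.1 this |>.resolve_left (lt_irrefl 0), tentSup_nonneg (ρ := ρ) F t]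
    rw [hsplit, map_add, ih, H a _ hsupp, add_zero]

theorem exists_support_subset_ball (hμ : μ ∈ FreeSpace M base) (hg : μ g ≠ 0)
    (hρ : 0 < ρ) :
    ∃ x, ∃ g' : Lip0 M base, μ g' ≠ 0 ∧ support g' ⊆ support g ∩ ball x ρ := by
  by_contra! H
  have hlim : Tendsto (fun F : Finset M => μ (g.mulWeight (lipschitzWith_tentSup hρ.le F)
      (abs_tentSup_le_one hρ.le F))) atTop (𝓝 (μ g)) :=
    tendsto_apply_of_tendsto_pointwise hμ (fun F => Lip0.norm_mulWeight_le _ _ _) fun t =>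
      tendsto_const_nhds.congr' <| (eventually_ge_atTop {t}).mono fun F hF => by
        simp [tentSup_of_mem hρ.le (Finset.singleton_subset_iff.1 hF)]
  simp only [apply_mulWeight_tentSup_eq_zero hρ fun x g' h => by_contra fun h' => H x g' h' h]
    at hlim
  exact hg (tendsto_nhds_unique hlim tendsto_const_nhds)

end Localization

section Support

variable {M : Type*} [MetricSpace M] {base : M} {μ : StrongDual ℝ (Lip0 M base)}

def IsSupportPoint (μ : StrongDual ℝ (Lip0 M base)) (x : M) : Prop :=
  ∀ ε > 0, ∃ g : Lip0 M base, μ g ≠ 0 ∧ support g ⊆ ball x ε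

lemma IsSupportPoint.mem {N : Set M} (hN : IsClosed N)
    (hμ : ∀ g : Lip0 M base, (∀ y ∈ N, g y = 0) → μ g = 0) {x : M}
    (hx : IsSupportPoint μ x) :
    x ∈ N := by
  by_contra hxN
  obtain ⟨ε, hε, hball⟩ := Metric.isOpen_iff.1 hN.isOpen_compl x hxN
  obtain ⟨g, hg, hsupp⟩ := hx ε hε
  exact hg (hμ g fun y hy => by_contra fun hgy => hball (hsupp hgy) hy)

lemma exists_ne_zero_of_apply_ne_zero {g : Lip0 M base} (hg : μ g ≠ 0) : ∃ t, g t ≠ 0 := by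
  by_contra! h
  exact hg (by rw [show g = 0 from Lip0.ext h, map_zero])

theorem exists_isSupportPoint_dist_le [CompleteSpace M] [BoundedSpace M]
    (hμ : μ ∈ FreeSpace M base) {g : Lip0 M base} (hg : μ g ≠ 0) {r : ℝ} (hr : 0 < r) :
    ∃ x, IsSupportPoint μ x ∧ ∃ t, g t ≠ 0 ∧ dist t x ≤ r := by
  let ρ : ℕ → ℝ := fun k => r / 4 / 2 ^ k
  have step : ∀ (k : ℕ) (h : {h : Lip0 M base // μ h ≠ 0}),
      ∃ h' : {h : Lip0 M base // μ h ≠ 0}, ∃ x,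
        support h'.1 ⊆ support h.1 ∩ ball x (ρ k) :=
    fun k h => by
      obtain ⟨x, h', hh', hsupp⟩ :=
        exists_support_subset_ball hμ h.2 (by positivity : 0 < ρ k)
      exact ⟨⟨h', hh'⟩, x, hsupp⟩
  choose next c hnext using step
  let G : ℕ → {h : Lip0 M base // μ h ≠ 0} := fun k => Nat.rec ⟨g, hg⟩ next k
  have hG : ∀ k, support (G (k + 1)).1 ⊆ support (G k).1 ∩ ball (c k (G k)) (ρ k) :=
    fun k => hnext k (G k)
  choose p hp using fun k => exists_ne_zero_of_apply_ne_zero (G k).2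
  have hball : ∀ k, dist (p (k + 1)) (c k (G k)) < ρ k := fun k => (hG k (hp (k + 1))).2
  have hstep : ∀ k, dist (p (k + 1)) (p (k + 1 + 1)) ≤ r / 2 / 2 ^ k := fun k => by
    have h₁ := hball k
    have h₂ := (hG k (hG (k + 1) (hp (k + 2))).1).2
    have : ρ k + ρ k = r / 2 / 2 ^ k := by simp only [ρ]; ring
    linarith [dist_triangle_right (p (k + 1)) (p (k + 2)) (c k (G k)), mem_ball.1 h₂]
  obtain ⟨x, hx⟩ := cauchySeq_tendsto_of_complete (cauchySeq_of_le_geometric_two hstep)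
  refine ⟨x, fun ε hε => ?_, p 1, (hG 0 (hp 1)).1,
    dist_le_of_le_geometric_two_of_tendsto₀ hstep hx⟩
  have hlim : Tendsto (fun k : ℕ => 2 * r / 2 ^ k) atTop (𝓝 0) :=
    tendsto_const_nhds.div_atTop (tendsto_pow_atTop_atTop_of_one_lt one_lt_two)
  obtain ⟨k, hk⟩ := (hlim.eventually (gt_mem_nhds hε)).exists
  refine ⟨(G (k + 1)).1, (G (k + 1)).2, fun t ht => mem_ball.2 ?_⟩
  have h₁ := (hG k ht).2
  have h₂ := dist_le_of_le_geometric_two_of_tendsto hstep hx k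
  have : ρ k + ρ k + r / 2 ^ k ≤ 2 * r / 2 ^ k := by
    simp only [ρ]; field_simp; linarith
  linarith [dist_triangle4 t (c k (G k)) (p (k + 1)) x, mem_ball.1 h₁, hball k,
    dist_comm (p (k + 1)) (c k (G k))]

end Support

theorem apply_eq_zero_of_forall_isSupportPoint {M : Type*} [MetricSpace M] [CompleteSpace M]
    [BoundedSpace M] {base : M} {μ : StrongDual ℝ (Lip0 M base)} (hμ : μ ∈ FreeSpace M base)
    {f : Lip0 M base} (hf : ∀ x, IsSupportPoint μ x → f x = 0) : μ f = 0 := by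
  by_contra hne
  obtain ⟨n, hn⟩ := (tendsto_apply_of_tendsto_pointwise hμ (fun n => f.norm_softThreshold_le _)
    f.tendsto_softThreshold |>.eventually_ne hne).exists
  set τ : ℝ := 1 / ((n : ℝ) + 1)
  have hτ : 0 < τ := Nat.one_div_pos_of_nat
  obtain ⟨x, hx, t, ht, hdist⟩ :=
    exists_isSupportPoint_dist_le hμ hn (div_pos hτ (by positivity : 0 < ‖f‖ + 1))
  have h₁ := f.lt_abs_of_softThreshold_ne_zero _ ht
  have h₂ : |f t| ≤ ‖f‖ * (τ / (‖f‖ + 1)) := by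
    simpa [hf x hx] using (Lip0.norm_apply_le f t x).trans
      (mul_le_mul_of_nonneg_left hdist (norm_nonneg f))
  have h₃ : ‖f‖ * (τ / (‖f‖ + 1)) < τ := by
    rw [mul_div_assoc', div_lt_iff₀ (by positivity)]; nlinarith [norm_nonneg f]
  linarith

theorem stmt_15_general {M : Type*} [MetricSpace M] [CompleteSpace M] (base : M)
    (hbdd : Bornology.IsBounded (Set.univ : Set M))
    {A : Type*} [Nonempty A] (Ms : A → Set M) (hclosed : ∀ a, IsClosed (Ms a)) :
    (⨅ a, FreeSpaceOn M base (Ms a)) = FreeSpaceOn M base (⋂ a, Ms a) := by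
  have : BoundedSpace M := Bornology.isBounded_univ.1 hbdd
  refine le_antisymm (fun μ hμ => ?_) (le_iInf fun a => freeSpaceOn_mono (iInter_subset Ms a))
  have hμa : ∀ a, μ ∈ FreeSpaceOn M base (Ms a) := (Submodule.mem_iInf _).1 hμ
  have hμF : μ ∈ FreeSpace M base := freeSpaceOn_le_freeSpace _ (hμa (Classical.arbitrary A))
  exact mem_freeSpaceOn_of_forall_apply_eq_zero hμF fun f hf =>
    apply_eq_zero_of_forall_isSupportPoint hμF fun x hx => hf x <| mem_iInter.2 fun a =>
      hx.mem (hclosed a) fun g hg => apply_eq_zero_of_mem_freeSpaceOn (hμa a) hg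

/-- The Aliaga–Pernecká intersection theorem: for a bounded complete metric space `M` and
closed subsets `M_a` containing the base point, `⋂_a F(M_a) = F(⋂_a M_a)`. -/
theorem stmt_15 {M : Type*} [MetricSpace M] [CompleteSpace M] (base : M)
    (hbdd : Bornology.IsBounded (Set.univ : Set M))
    {A : Type*} [Nonempty A] (Ms : A → Set M) (hclosed : ∀ a, IsClosed (Ms a))
    (hbase : ∀ a, base ∈ Ms a) :
    (⨅ a, FreeSpaceOn M base (Ms a)) = FreeSpaceOn M base (⋂ a, Ms a) :=
  stmt_15_general base hbdd Ms hclosed
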